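/- arXiv:1201.6152 — 3 statements merged into one kernel-verified Lean document; each statement's English description precedes it below -/
import Mathlib

section
/- Let p > 2 be a prime and let a, b be integers with a > 0, b ≥ 0 and gcd(a, p) = 1, and let r₀ ∈ {0, 1, ..., p-1} satisfy a·r₀ + b ≡ 0 (mod p). Then ∑_{k=1}^{p-1} q^{bk}/[ak]_q^3 ≡ (1-q)^3·( −(p-1)(p-3)/8 − r₀·(p² − 9p + 12 − 3r₀(p-3) + 2r₀²)/12 ) (mod [p]_q). -/
/-!
Both sides are regular at a primitive `p`-th root of unity `ζ`, and `[p]_q` is the minimal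
polynomial of `ζ` over `ℚ`, so the congruence amounts to the two sides having the same value
at `ζ`. Since `[ak]_ζ = (1 - ζ^(ak)) / (1 - ζ)` and `ζ^b = (ζ^a)^(p - r₀)`, the left side takes
the value `(1 - ζ)^3 S₃(p - r₀)`, where `S_t(c) = ∑_{j=1}^{p-1} η^(cj) / (1 - η^j)^t` for the
primitive root `η = ζ^a`. These sums satisfy `S_{t+1}(c+1) = S_{t+1}(c) - S_t(c)`, are
`p`-periodic in `c`, and `S₀(c) = -1` for `p ∤ c`. Hence on `1 ≤ c ≤ p` each `S_t` is a
polynomial in `c` of degree `t`, whose constant term is pinned down by `∑_{c=1}^p S_t(c) = 0`,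
a telescoping sum of the periodic `S_{t+1}`.
-/

open Polynomial Finset

noncomputable section

/-- The `q`-integer `[n]_q = 1 + q + ⋯ + q^(n-1)`, as a polynomial in `ℚ[q]`. -/
def qIntP (n : ℕ) : Polynomial ℚ := ∑ i ∈ Finset.range n, X ^ i

/-- The `q`-integer `[n]_q` viewed in the field of rational functions `ℚ(q)`. -/
def qN (n : ℕ) : RatFunc ℚ := algebraMap (Polynomial ℚ) (RatFunc ℚ) (qIntP n)

/-- The `q`-Pochhammer symbol `(q; q)_n = ∏_{j=1}^{n} (1 - q^j)` in `ℚ(q)`. -/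
def qqPoch (n : ℕ) : RatFunc ℚ :=
  algebraMap (Polynomial ℚ) (RatFunc ℚ) (∏ j ∈ Finset.range n, (1 - X ^ (j + 1)))

/-- The `q`-Pochhammer symbol `(-q; q)_n = ∏_{j=1}^{n} (1 + q^j)` in `ℚ(q)`. -/
def nqPoch (n : ℕ) : RatFunc ℚ :=
  algebraMap (Polynomial ℚ) (RatFunc ℚ) (∏ j ∈ Finset.range n, (1 + X ^ (j + 1)))

/-- The Gaussian `q`-binomial coefficient, as a rational function. -/
def qbin (n k : ℕ) : RatFunc ℚ :=
  if k ≤ n then qqPoch n / (qqPoch k * qqPoch (n - k)) else 0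

/-- `qCong p r x y` means `x ≡ y (mod [p]_q^r)`: the difference `x - y` can be
written as a fraction whose numerator (a polynomial) is divisible by `[p]_q^r`
and whose denominator is relatively prime to `[p]_q`. -/
def qCong (p r : ℕ) (x y : RatFunc ℚ) : Prop :=
  ∃ a b : Polynomial ℚ, IsCoprime b (qIntP p) ∧
    (x - y) * algebraMap (Polynomial ℚ) (RatFunc ℚ) b =
      algebraMap (Polynomial ℚ) (RatFunc ℚ) (qIntP p ^ r * a)

theorem eq_of_sub_succ_eq_of_sum_range_eq {R : Type*} [CommRing R] [NoZeroDivisors R]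
    [CharZero R] {F f : ℕ → R} {n : ℕ} (hstep : ∀ d, d + 1 < n → F (d + 1) - f (d + 1) = F d - f d)
    (hsum : ∑ d ∈ range n, F d = ∑ d ∈ range n, f d) {d : ℕ} (hd : d < n) : F d = f d := by
  have hconst : ∀ d < n, F d - f d = F 0 - f 0 := by
    intro d hd
    induction d with
    | zero => rfl
    | succ d ih => rw [hstep d hd, ih (by omega)]
  have hzero : F 0 - f 0 = 0 := by
    have h : ∑ d ∈ range n, (F d - f d) = n * (F 0 - f 0) := by
      rw [sum_congr rfl fun d hd => hconst d (mem_range.1 hd), sum_const, card_range, nsmul_eq_mul]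
    rw [sum_sub_distrib, hsum, sub_self] at h
    exact (mul_eq_zero.1 h.symm).resolve_left (Nat.cast_ne_zero.2 (by omega))
  linear_combination hconst d hd + hzero

theorem sum_range_eq_add_sum_Icc {M : Type*} [AddCommMonoid M] (f : ℕ → M) {n : ℕ}
    (hn : 0 < n) : ∑ j ∈ range n, f j = f 0 + ∑ j ∈ Icc 1 (n - 1), f j := by
  rw [range_eq_Ico, sum_eq_sum_Ico_succ_bot hn]
  rfl

section RootSum

variable {K : Type*} [Field K] {p : ℕ} {ζ : K}

def rootSum (ζ : K) (p t c : ℕ) : K := ∑ j ∈ Icc 1 (p - 1), ζ ^ (c * j) / (1 - ζ ^ j) ^ t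

theorem IsPrimitiveRoot.one_sub_pow_ne_zero (hζ : IsPrimitiveRoot ζ p) {n : ℕ} (hn : ¬ p ∣ n) :
    1 - ζ ^ n ≠ 0 :=
  sub_ne_zero.2 fun h => hn ((hζ.pow_eq_one_iff_dvd n).1 h.symm)

theorem not_dvd_of_mem_Icc {j : ℕ} (hj : j ∈ Icc 1 (p - 1)) : ¬ p ∣ j := by
  rw [mem_Icc] at hj
  exact Nat.not_dvd_of_pos_of_lt hj.1 (by omega)

theorem rootSum_succ_succ (hζ : IsPrimitiveRoot ζ p) (t c : ℕ) :
    rootSum ζ p (t + 1) (c + 1) = rootSum ζ p (t + 1) c - rootSum ζ p t c := by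
  simp only [rootSum, ← sum_sub_distrib]
  refine sum_congr rfl fun j hj => ?_
  have := hζ.one_sub_pow_ne_zero (not_dvd_of_mem_Icc hj)
  rw [add_mul, one_mul, pow_add]
  field_simp
  ring

theorem rootSum_add_self (hζ : IsPrimitiveRoot ζ p) (t c : ℕ) :
    rootSum ζ p t (c + p) = rootSum ζ p t c := by
  simp only [rootSum, add_mul, pow_add, pow_mul ζ p, hζ.pow_eq_one, one_pow, mul_one]

theorem rootSum_zero (hp : p.Prime) (hζ : IsPrimitiveRoot ζ p) {c : ℕ} (hc1 : 1 ≤ c)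
    (hcp : c < p) : rootSum ζ p 0 c = -1 := by
  have hη : IsPrimitiveRoot (ζ ^ c) p :=
    hζ.pow_of_coprime c (hp.coprime_iff_not_dvd.2 (Nat.not_dvd_of_pos_of_lt hc1 hcp)).symm
  have h := hη.geom_sum_eq_zero hp.one_lt
  rw [sum_range_eq_add_sum_Icc _ hp.pos, pow_zero] at h
  simp only [rootSum, pow_zero, div_one, pow_mul]
  linear_combination h

variable [CharZero K]

theorem rootSum_eq_of_antidiff (hζ : IsPrimitiveRoot ζ p) {t : ℕ} {P Q R : K → K}
    (hQ : ∀ c, Q (c + 1) - Q c = -P c) (hR : ∀ c, R (c + 1) - R c = -Q c)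
    (hRp : R (p + 1) = R 1) (hP : ∀ c, 1 ≤ c → c < p → rootSum ζ p t c = P c)
    {c : ℕ} (hc1 : 1 ≤ c) (hcp : c ≤ p) : rootSum ζ p (t + 1) c = Q c := by
  obtain ⟨d, rfl⟩ := Nat.exists_eq_add_of_le' hc1
  have telescope (G : ℕ → K) (hG : G p = G 0) : ∑ d ∈ range p, (G d - G (d + 1)) = 0 := by
    rw [sum_range_sub', hG, sub_self]
  push_cast
  refine eq_of_sub_succ_eq_of_sum_range_eq (F := fun d => rootSum ζ p (t + 1) (d + 1))
    (f := fun d => Q ((d : K) + 1)) (n := p) (fun d hd => ?_) ?_ (by omega)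
  · have := hQ ((d : K) + 1)
    rw [rootSum_succ_succ hζ, hP (d + 1) (by omega) hd]
    push_cast at this ⊢
    linear_combination -this
  · have hF (d : ℕ) : rootSum ζ p (t + 1) (d + 1) =
        rootSum ζ p (t + 1 + 1) (d + 1) - rootSum ζ p (t + 1 + 1) (d + 1 + 1) := by
      rw [rootSum_succ_succ hζ (t + 1) (d + 1)]; ring
    have hf (d : ℕ) : Q ((d : K) + 1) = R ((d : K) + 1) - R (((d + 1 : ℕ) : K) + 1) := by
      have := hR ((d : K) + 1)
      push_cast
      linear_combination this
    rw [sum_congr rfl fun d _ => hF d, sum_congr rfl fun d _ => hf d,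
      telescope (fun d => rootSum ζ p (t + 1 + 1) (d + 1))
        (by rw [add_comm p, rootSum_add_self hζ]),
      telescope (fun d => R ((d : K) + 1)) (by push_cast; rw [hRp, zero_add])]

theorem rootSum_one (hp : p.Prime) (hζ : IsPrimitiveRoot ζ p) {c : ℕ} (hc1 : 1 ≤ c)
    (hcp : c ≤ p) : rootSum ζ p 1 c = c - (p + 1) / 2 :=
  rootSum_eq_of_antidiff hζ (P := fun _ => -1) (Q := fun c => c - (p + 1) / 2)
    (R := fun c => -((p : K) ^ 2 - 1) / 12 - (c - 1) * (c - p - 1) / 2)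
    (fun _ => by ring) (fun _ => by ring) (by ring) (fun _ => rootSum_zero hp hζ) hc1 hcp

theorem rootSum_two (hp : p.Prime) (hζ : IsPrimitiveRoot ζ p) {c : ℕ} (hc1 : 1 ≤ c)
    (hcp : c ≤ p) : rootSum ζ p 2 c = -((p : K) ^ 2 - 1) / 12 - (c - 1) * (c - p - 1) / 2 :=
  rootSum_eq_of_antidiff hζ (P := fun c => c - (p + 1) / 2)
    (Q := fun c => -((p : K) ^ 2 - 1) / 12 - (c - 1) * (c - p - 1) / 2)
    (R := fun c => -((p : K) ^ 2 - 1) / 24 + (c - 1) * ((p : K) ^ 2 - 1) / 12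
      + (c - 1) * (c - 2) * (2 * c - 3 - 3 * p) / 12)
    (fun _ => by ring) (fun _ => by ring) (by ring)
    (fun _ h1 h2 => rootSum_one hp hζ h1 h2.le) hc1 hcp

theorem rootSum_three (hp : p.Prime) (hζ : IsPrimitiveRoot ζ p) {c : ℕ} (hc1 : 1 ≤ c)
    (hcp : c ≤ p) :
    rootSum ζ p 3 c = -((p : K) ^ 2 - 1) / 24 + (c - 1) * ((p : K) ^ 2 - 1) / 12
      + (c - 1) * (c - 2) * (2 * c - 3 - 3 * p) / 12 :=
  rootSum_eq_of_antidiff hζ (P := fun c => -((p : K) ^ 2 - 1) / 12 - (c - 1) * (c - p - 1) / 2)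
    (Q := fun c => -((p : K) ^ 2 - 1) / 24 + (c - 1) * ((p : K) ^ 2 - 1) / 12
      + (c - 1) * (c - 2) * (2 * c - 3 - 3 * p) / 12)
    (R := fun c => -(c - 1) * (c - 3) * (c - p - 1) * (c - p - 3) / 24)
    (fun _ => by ring) (fun _ => by ring) (by ring)
    (fun _ h1 h2 => rootSum_two hp hζ h1 h2.le) hc1 hcp

end RootSum

section GeomSum

variable {K : Type*} [Field K] {p : ℕ} {ζ : K}

theorem IsPrimitiveRoot.geom_sum_ne_zero (hζ : IsPrimitiveRoot ζ p) {n : ℕ} (hn : ¬ p ∣ n) :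
    ∑ i ∈ range n, ζ ^ i ≠ 0 := fun h =>
  hζ.one_sub_pow_ne_zero hn (by rw [← geom_sum_mul_neg, h, zero_mul])

theorem sum_pow_div_geom_sum_pow (hp : p.Prime) (hζ : IsPrimitiveRoot ζ p) {a b r₀ : ℕ}
    (hr₀ : r₀ < p) (hr : (a * r₀ + b) % p = 0) (t : ℕ) :
    ∑ k ∈ Icc 1 (p - 1), ζ ^ (b * k) / (∑ i ∈ range (a * k), ζ ^ i) ^ t
      = (1 - ζ) ^ t * rootSum (ζ ^ a) p t (p - r₀) := by
  have hb : b ≡ a * (p - r₀) [MOD p] := by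
    refine Nat.ModEq.add_left_cancel' (a * r₀) ?_
    rw [← mul_add, Nat.add_sub_cancel' hr₀.le]
    exact hr.trans (Nat.mul_mod_left a p).symm
  have hζb : ζ ^ b = ζ ^ (a * (p - r₀)) := by
    rw [(hζ.isOfFinOrder hp.ne_zero).pow_eq_pow_iff_modEq, ← hζ.eq_orderOf]
    exact hb
  have hζ1 : 1 - ζ ≠ 0 := by simpa using hζ.one_sub_pow_ne_zero (n := 1) hp.not_dvd_one
  rw [rootSum, mul_sum]
  refine sum_congr rfl fun k _ => ?_
  rw [eq_div_of_mul_eq hζ1 (geom_sum_mul_neg ζ (a * k)), div_pow, div_div_eq_mul_div, pow_mul ζ b,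
    hζb]
  ring

end GeomSum

section HasValueAt

variable {F K : Type*} [Field F] [Field K] [Algebra F K]

def HasValueAt (x : RatFunc F) (ζ v : K) : Prop :=
  ∃ N Q : F[X], aeval ζ Q ≠ 0 ∧ x * algebraMap F[X] (RatFunc F) Q = algebraMap F[X] (RatFunc F) N ∧
    aeval ζ N = v * aeval ζ Q

variable {ζ : K}

theorem hasValueAt_algebraMap (P : F[X]) :
    HasValueAt (algebraMap F[X] (RatFunc F) P) ζ (aeval ζ P) :=
  ⟨P, 1, by simp, by simp, by simp⟩

theorem HasValueAt.add {x y : RatFunc F} {v w : K} (hx : HasValueAt x ζ v) (hy : HasValueAt y ζ w) :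
    HasValueAt (x + y) ζ (v + w) := by
  obtain ⟨N, Q, hQ, hxQ, hN⟩ := hx
  obtain ⟨N', Q', hQ', hyQ', hN'⟩ := hy
  refine ⟨N * Q' + N' * Q, Q * Q', by simpa using mul_ne_zero hQ hQ', ?_, ?_⟩
  · simp only [map_add, map_mul, ← hxQ, ← hyQ']; ring
  · simp only [map_add, map_mul, hN, hN']; ring

theorem HasValueAt.sub {x y : RatFunc F} {v w : K} (hx : HasValueAt x ζ v) (hy : HasValueAt y ζ w) :
    HasValueAt (x - y) ζ (v - w) := by
  obtain ⟨N, Q, hQ, hxQ, hN⟩ := hx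
  obtain ⟨N', Q', hQ', hyQ', hN'⟩ := hy
  refine ⟨N * Q' - N' * Q, Q * Q', by simpa using mul_ne_zero hQ hQ', ?_, ?_⟩
  · simp only [map_sub, map_mul, ← hxQ, ← hyQ']; ring
  · simp only [map_sub, map_mul, hN, hN']; ring

theorem HasValueAt.div {x y : RatFunc F} {v w : K} (hx : HasValueAt x ζ v) (hy : HasValueAt y ζ w)
    (hw : w ≠ 0) : HasValueAt (x / y) ζ (v / w) := by
  obtain ⟨N, Q, hQ, hxQ, hN⟩ := hx
  obtain ⟨N', Q', hQ', hyQ', hN'⟩ := hy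
  have hN'0 : aeval ζ N' ≠ 0 := by rw [hN']; exact mul_ne_zero hw hQ'
  have hy0 : y ≠ 0 := by
    rintro rfl
    have : N' = 0 := RatFunc.algebraMap_injective F (by rw [← hyQ', zero_mul, map_zero])
    exact hN'0 (by rw [this, map_zero])
  refine ⟨N * Q', Q * N', by simpa using mul_ne_zero hQ hN'0, ?_, ?_⟩
  · rw [map_mul, map_mul, ← hxQ, ← hyQ']; field_simp
  · rw [map_mul, map_mul, hN, hN']; field_simp

theorem hasValueAt_sum {ι : Type*} (s : Finset ι) {x : ι → RatFunc F} {v : ι → K}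
    (h : ∀ i ∈ s, HasValueAt (x i) ζ (v i)) : HasValueAt (∑ i ∈ s, x i) ζ (∑ i ∈ s, v i) := by
  classical
  induction s using Finset.induction_on with
  | empty => simpa using hasValueAt_algebraMap (F := F) (ζ := ζ) 0
  | insert i s hi ih =>
    rw [sum_insert hi, sum_insert hi]
    exact (h i (mem_insert_self i s)).add (ih fun j hj => h j (mem_insert_of_mem hj))

end HasValueAt

theorem qCong_one_of_hasValueAt {K : Type*} [Field K] [CharZero K] {p : ℕ} (hp : p.Prime) {ζ : K}
    (hζ : IsPrimitiveRoot ζ p) {x y : RatFunc ℚ} {v : K} (hx : HasValueAt x ζ v)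
    (hy : HasValueAt y ζ v) : qCong p 1 x y := by
  obtain ⟨N, Q, hQ, hQN, hN⟩ := hx.sub hy
  have hcyc : qIntP p = cyclotomic p ℚ := by
    have : Fact p.Prime := ⟨hp⟩
    rw [cyclotomic_prime, qIntP]
  have hmin : qIntP p = minpoly ℚ ζ := hcyc.trans (cyclotomic_eq_minpoly_rat hζ hp.pos)
  obtain ⟨A, hA⟩ : qIntP p ∣ N := hmin ▸ minpoly.dvd ℚ ζ (by rw [hN, sub_self, zero_mul])
  have hnd : ¬ qIntP p ∣ Q := fun ⟨B, hB⟩ => hQ (by rw [hB, map_mul, hmin, minpoly.aeval, zero_mul])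
  have hirr : Irreducible (qIntP p) := hcyc ▸ cyclotomic.irreducible_rat hp.pos
  exact ⟨A, Q, ((hirr.coprime_iff_not_dvd).2 hnd).symm, by rw [hQN, hA, pow_one]⟩

theorem aeval_qIntP {K : Type*} [Field K] [Algebra ℚ K] (ζ : K) (n : ℕ) :
    aeval ζ (qIntP n) = ∑ i ∈ range n, ζ ^ i := by
  simp [qIntP]

theorem qHarmonic_d3_general (p a b : ℕ) (hp : p.Prime)
    (hap : Nat.gcd a p = 1)
    (r₀ : ℕ) (hr₀ : r₀ < p) (hr : (a * r₀ + b) % p = 0) :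
    qCong p 1
      (∑ k ∈ Finset.Icc 1 (p - 1), (RatFunc.X : RatFunc ℚ) ^ (b * k) / qN (a * k) ^ 3)
      ((1 - RatFunc.X) ^ 3 *
        RatFunc.C (-(((p : ℚ) - 1) * ((p : ℚ) - 3)) / 8 -
          (r₀ : ℚ) * ((p : ℚ) ^ 2 - 9 * (p : ℚ) + 12 - 3 * (r₀ : ℚ) * ((p : ℚ) - 3)
            + 2 * (r₀ : ℚ) ^ 2) / 12)) := by
  set cq : ℚ := -(((p : ℚ) - 1) * ((p : ℚ) - 3)) / 8 - (r₀ : ℚ) * ((p : ℚ) ^ 2 - 9 * (p : ℚ) + 12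
    - 3 * (r₀ : ℚ) * ((p : ℚ) - 3) + 2 * (r₀ : ℚ) ^ 2) / 12 with hcq
  obtain ⟨ζ, hζ⟩ : ∃ ζ : ℂ, IsPrimitiveRoot ζ p := ⟨_, Complex.isPrimitiveRoot_exp p hp.ne_zero⟩
  have hpa : ¬ p ∣ a := hp.coprime_iff_not_dvd.1 (Nat.Coprime.symm hap)
  have hvalue : ∑ k ∈ Icc 1 (p - 1), ζ ^ (b * k) / (∑ i ∈ range (a * k), ζ ^ i) ^ 3
      = (1 - ζ) ^ 3 * (cq : ℂ) := by
    rw [sum_pow_div_geom_sum_pow hp hζ hr₀ hr,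
      rootSum_three hp (hζ.pow_of_coprime a hap) (by omega) (by omega), hcq]
    push_cast [Nat.cast_sub hr₀.le]
    ring
  refine qCong_one_of_hasValueAt hp hζ (v := (1 - ζ) ^ 3 * cq) ?_ ?_
  · rw [← hvalue]
    refine hasValueAt_sum _ fun k hk => ?_
    have hk0 : ∑ i ∈ range (a * k), ζ ^ i ≠ 0 :=
      hζ.geom_sum_ne_zero fun h => (hp.dvd_mul.1 h).elim hpa (not_dvd_of_mem_Icc hk)
    have := (hasValueAt_algebraMap (ζ := ζ) (X ^ (b * k))).div
      (hasValueAt_algebraMap (qIntP (a * k) ^ 3))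
      (by rwa [map_pow, aeval_qIntP, pow_ne_zero_iff three_ne_zero])
    simpa [aeval_qIntP, qN] using this
  · have h := hasValueAt_algebraMap (ζ := ζ) ((1 - X) ^ 3 * C cq)
    simp only [map_mul, map_pow, map_sub, map_one, RatFunc.algebraMap_X, RatFunc.algebraMap_C,
      aeval_X, aeval_C, eq_ratCast (algebraMap ℚ ℂ)] at h
    exact h

/-- For a prime `p > 2`, integers `a > 0`, `b ≥ 0` with `gcd(a,p) = 1` and
`r₀ ∈ {0,…,p-1}` with `a r₀ + b ≡ 0 (mod p)`:
`∑_{k=1}^{p-1} q^{bk}/[ak]_q³ ≡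
  (1-q)³(−(p-1)(p-3)/8 − r₀(p²-9p+12-3r₀(p-3)+2r₀²)/12) (mod [p]_q)`. -/
theorem qHarmonic_d3 (p a b : ℕ) (hp : p.Prime) (hp2 : 2 < p)
    (ha : 0 < a) (hap : Nat.gcd a p = 1)
    (r₀ : ℕ) (hr₀ : r₀ < p) (hr : (a * r₀ + b) % p = 0) :
    qCong p 1
      (∑ k ∈ Finset.Icc 1 (p - 1), (RatFunc.X : RatFunc ℚ) ^ (b * k) / qN (a * k) ^ 3)
      ((1 - RatFunc.X) ^ 3 *
        RatFunc.C (-(((p : ℚ) - 1) * ((p : ℚ) - 3)) / 8 -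
          (r₀ : ℚ) * ((p : ℚ) ^ 2 - 9 * (p : ℚ) + 12 - 3 * (r₀ : ℚ) * ((p : ℚ) - 3)
            + 2 * (r₀ : ℚ) ^ 2) / 12)) :=
  qHarmonic_d3_general p a b hp hap r₀ hr₀ hr
end
end

section
/- Let b, b̄, a, d be non-negative integers with a·d = b + b̄ > 0, and let p > 2 be a prime with gcd(a, p) = 1. Then ∑_{k=1}^{p-1} (-1)^k ((-1)^{d} q^{bk} + q^{b̄k}) / [ak]_q^d ≡ b·(1-q)·[p]_q · ∑_{k=1}^{p-1} (-1)^k q^{b̄k}/[ak]_q^d − a·d·[p]_q · ∑_{k=1}^{p-1} (-1)^k q^{b̄k}/[ak]_q^{d+1} (mod [p]_q^2). -/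
/-!
Since `p` is odd, reindexing `k ↦ p - k` pairs the `q^{b̄k}` part of the term `k` with the
`q^{b(p-k)}` part of the term `p - k`, so it suffices to prove the congruence for each pair.
Modulo `[p]^2` put `t = [p]`, so `t² = 0`; then `q^p = 1 + (q - 1) t`, `[ap] = a t` and
`q^{ak} [a(p-k)] = [ap] - [ak] = a t - [ak]`. Expanding `[a(p-k)]^{-d}` and `q^{b(p-k)}` to first
order in `t` and using `q^{(b+b̄)k} = q^{akd}` turns each pair into the corresponding term of the
right-hand side.
-/

open Polynomial Finset

noncomputable section

lemma qIntP_mul_X_sub_one (n : ℕ) : qIntP n * (X - 1) = X ^ n - 1 := geom_sum_mul X n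

lemma qIntP_add (m n : ℕ) : qIntP (m + n) = qIntP m + X ^ m * qIntP n := by
  simp only [qIntP, sum_range_add, pow_add, mul_sum]

lemma qIntP_ne_zero {n : ℕ} (hn : n ≠ 0) : qIntP n ≠ 0 :=
  fun h => hn (by simpa [qIntP] using congrArg (eval 1) h)

lemma qIntP_prime_eq_cyclotomic {p : ℕ} (hp : p.Prime) : qIntP p = cyclotomic p ℚ := by
  have := Fact.mk hp
  rw [cyclotomic_prime, qIntP]

lemma isCoprime_X_qIntP {p : ℕ} (hp : 0 < p) : IsCoprime (X : ℚ[X]) (qIntP p) := by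
  refine ⟨X ^ (p - 1), 1 - X, ?_⟩
  rw [← pow_succ, Nat.sub_add_cancel hp]
  linear_combination -qIntP_mul_X_sub_one p

lemma isCoprime_qIntP_of_not_dvd {p m : ℕ} (hp : p.Prime) (hpm : ¬ p ∣ m) :
    IsCoprime (qIntP m) (qIntP p) := by
  have hm : 0 < m := Nat.pos_of_ne_zero fun h => hpm (h ▸ dvd_zero p)
  have hcop : IsCoprime (cyclotomic p ℚ) (X ^ m - 1) := by
    rw [← prod_cyclotomic_eq_X_pow_sub_one hm]
    exact IsCoprime.prod_right fun i hi =>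
      cyclotomic.isCoprime_rat fun h => hpm (h ▸ Nat.dvd_of_mem_divisors hi)
  rw [← qIntP_mul_X_sub_one] at hcop
  rw [qIntP_prime_eq_cyclotomic hp]
  exact hcop.of_mul_right_left.symm

section SquareZero

variable {R : Type*} [CommRing R] {y : R}

lemma left_mul_add_pow_of_sq_eq_zero (hy : y ^ 2 = 0) (x : R) (n : ℕ) :
    x * (x + y) ^ n = x ^ (n + 1) + n * x ^ n * y := by
  induction n with
  | zero => simp
  | succ n ih =>
    rw [pow_succ, ← mul_assoc, ih]
    push_cast
    linear_combination (n * x ^ n) * hy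

lemma right_mul_add_pow_of_sq_eq_zero (hy : y ^ 2 = 0) (x : R) (n : ℕ) :
    y * (x + y) ^ n = y * x ^ n := by
  induction n with
  | zero => simp
  | succ n ih =>
    rw [pow_succ, ← mul_assoc, ih]
    linear_combination x ^ n * hy

lemma one_add_pow_of_sq_eq_zero (hy : y ^ 2 = 0) (n : ℕ) : (1 + y) ^ n = 1 + n * y := by
  simpa using left_mul_add_pow_of_sq_eq_zero hy 1 n

/-- The identity behind `qIntP_sq_dvd_reflect`, read in `ℚ[q] ⧸ ([p]^2)` with `s = q`, `t = [p]`,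
`u = [ak]` and `w = q^{ak} [am]`. -/
lemma reflect_identity_of_sq_eq_zero {s t u w : R} (a b d : ℕ) (ht : t ^ 2 = 0)
    (hw : w = a * t - u) :
    u * w ^ d - (-1) ^ d * (1 + b * (s - 1) * t) * u ^ (d + 1)
      - b * (1 - s) * t * u * w ^ d + a * d * t * w ^ d = 0 := by
  have hat : (a * t) ^ 2 = 0 := by rw [mul_pow, ht, mul_zero]
  have h1 := left_mul_add_pow_of_sq_eq_zero hat (-u) d
  have h2 := right_mul_add_pow_of_sq_eq_zero hat (-u) d
  rw [neg_add_eq_sub, ← hw] at h1 h2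
  linear_combination
    -(1 - b * (1 - s) * t) * h1 + d * h2 + (b * (1 - s) * d * a * (-u) ^ d) * ht

end SquareZero

section ModQIntPSq

variable (p : ℕ)

local notation "Rp" => ℚ[X] ⧸ Ideal.span {qIntP p ^ 2}
local notation "π" => Ideal.Quotient.mk (Ideal.span {qIntP p ^ 2})

lemma mk_qIntP_sq : π (qIntP p) ^ 2 = 0 := by
  rw [← map_pow, Ideal.Quotient.eq_zero_iff_dvd]

lemma mk_X_pow_mul (n : ℕ) : π (X ^ (n * p)) = π (1 + (n : ℚ[X]) * (X - 1) * qIntP p) := by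
  have hXp : (X : ℚ[X]) ^ p = 1 + (X - 1) * qIntP p := by
    linear_combination -qIntP_mul_X_sub_one p
  have hsq : (π ((X - 1) * qIntP p)) ^ 2 = 0 := by
    rw [map_mul, mul_pow, mk_qIntP_sq, mul_zero]
  rw [mul_comm, pow_mul, hXp, map_pow, map_add, map_one, one_add_pow_of_sq_eq_zero hsq]
  simp only [map_add, map_mul, map_one, map_natCast, mul_assoc]

lemma mk_qIntP_mul (n : ℕ) : π (qIntP (n * p)) = π ((n : ℚ[X]) * qIntP p) := by
  induction n with
  | zero => simp [qIntP]
  | succ n ih =>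
    rw [add_mul, one_mul, qIntP_add, map_add, map_mul, ih, mk_X_pow_mul]
    simp only [map_add, map_mul, map_sub, map_one, map_natCast, Nat.cast_succ]
    linear_combination (n * (π X - 1)) * mk_qIntP_sq p

lemma qIntP_sq_dvd_reflect (a b d k m : ℕ) (hkm : k + m = p) :
    qIntP p ^ 2 ∣ qIntP (a * k) * (X ^ (a * k) * qIntP (a * m)) ^ d
      - (-1) ^ d * X ^ (b * p) * qIntP (a * k) ^ (d + 1)
      - (b : ℚ[X]) * (1 - X) * qIntP p * qIntP (a * k) * (X ^ (a * k) * qIntP (a * m)) ^ d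
      + (a : ℚ[X]) * (d : ℚ[X]) * qIntP p * (X ^ (a * k) * qIntP (a * m)) ^ d := by
  have hW : π X ^ (a * k) * π (qIntP (a * m)) = (a : Rp) * π (qIntP p) - π (qIntP (a * k)) := by
    have := congrArg π (qIntP_add (a * k) (a * m))
    rw [← mul_add, hkm, mk_qIntP_mul] at this
    simp only [map_add, map_mul, map_pow, map_natCast] at this
    linear_combination -this
  have hXbp : π X ^ (b * p) = 1 + (b : Rp) * (π X - 1) * π (qIntP p) := by
    simpa using mk_X_pow_mul p b
  rw [← Ideal.Quotient.eq_zero_iff_dvd]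
  simp only [map_add, map_sub, map_mul, map_pow, map_neg, map_one, map_natCast]
  rw [hXbp]
  exact reflect_identity_of_sq_eq_zero a b d (mk_qIntP_sq p) hW

end ModQIntPSq

def qCongZero (p r : ℕ) : Submodule ℚ[X] (RatFunc ℚ) where
  carrier := {z | ∃ a b : ℚ[X], IsCoprime b (qIntP p) ∧
    z * algebraMap ℚ[X] (RatFunc ℚ) b = algebraMap ℚ[X] (RatFunc ℚ) (qIntP p ^ r * a)}
  zero_mem' := ⟨0, 1, isCoprime_one_left, by simp⟩
  add_mem' := by
    rintro z₁ z₂ ⟨a₁, b₁, hb₁, h₁⟩ ⟨a₂, b₂, hb₂, h₂⟩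
    refine ⟨a₁ * b₂ + a₂ * b₁, b₁ * b₂, hb₁.mul_left hb₂, ?_⟩
    simp only [map_mul, map_add] at h₁ h₂ ⊢
    linear_combination
      algebraMap ℚ[X] (RatFunc ℚ) b₂ * h₁ + algebraMap ℚ[X] (RatFunc ℚ) b₁ * h₂
  smul_mem' := by
    rintro c z ⟨a, b, hb, h⟩
    refine ⟨c * a, b, hb, ?_⟩
    simp only [Algebra.smul_def, map_mul] at h ⊢
    linear_combination algebraMap ℚ[X] (RatFunc ℚ) c * h

lemma qCong_iff_sub_mem {p r : ℕ} {x y : RatFunc ℚ} :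
    qCong p r x y ↔ x - y ∈ qCongZero p r :=
  Iff.rfl

lemma qCong_reflect {p a b bb d k m : ℕ} (hp : p.Prime) (hpa : ¬ p ∣ a) (hd : a * d = b + bb)
    (hk : 0 < k) (hm : 0 < m) (hkm : k + m = p) :
    qCong p 2
      (RatFunc.X ^ (bb * k) / qN (a * k) ^ d
        - (-1) ^ d * RatFunc.X ^ (b * m) / qN (a * m) ^ d)
      ((b : RatFunc ℚ) * (1 - RatFunc.X) * qN p * RatFunc.X ^ (bb * k) / qN (a * k) ^ d
        - (a : RatFunc ℚ) * (d : RatFunc ℚ) * qN p * RatFunc.X ^ (bb * k)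
          / qN (a * k) ^ (d + 1)) := by
  have hcop {j : ℕ} (hj : 0 < j) (hjp : j < p) : IsCoprime (qIntP (a * j)) (qIntP p) :=
    isCoprime_qIntP_of_not_dvd hp fun h =>
      (hp.dvd_mul.mp h).elim hpa (Nat.not_dvd_of_pos_of_lt hj hjp)
  obtain ⟨N, hN⟩ := qIntP_sq_dvd_reflect p a b d k m hkm
  have hXd : (X ^ (a * k)) ^ d = (X : ℚ[X]) ^ (b * k) * X ^ (bb * k) := by
    rw [← pow_mul, ← pow_add, ← add_mul, ← hd]; ring_nf
  rw [mul_pow, hXd, ← hkm, mul_add, pow_add] at hN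
  refine ⟨N, X ^ (b * k) * qIntP (a * m) ^ d * qIntP (a * k) ^ (d + 1),
    (((isCoprime_X_qIntP hp.pos).pow_left.mul_left (hcop hm (by omega)).pow_left).mul_left
      (hcop hk (by omega)).pow_left), ?_⟩
  rw [← hkm, ← hN]
  have ha : a ≠ 0 := by rintro rfl; exact hpa (dvd_zero p)
  have hne {j : ℕ} (hj : 0 < j) : qN (a * j) ≠ 0 :=
    (map_ne_zero_iff _ (RatFunc.algebraMap_injective ℚ)).mpr
      (qIntP_ne_zero (mul_ne_zero ha hj.ne'))
  have hk' := hne hk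
  have hm' := hne hm
  have hX := RatFunc.X_ne_zero (K := ℚ)
  simp only [qN, map_add, map_sub, map_mul, map_pow, map_neg, map_one, map_natCast,
    RatFunc.algebraMap_X] at hk' hm' ⊢
  field_simp
  ring

lemma sum_Icc_reflect {M : Type*} [AddCommMonoid M] (f : ℕ → M) (n : ℕ) :
    ∑ k ∈ Icc 1 (n - 1), f (n - k) = ∑ k ∈ Icc 1 (n - 1), f k := by
  refine sum_nbij' (n - ·) (n - ·) ?_ ?_ ?_ ?_ fun _ _ => rfl <;>
    intro k hk <;> simp only [mem_Icc] at hk ⊢ <;> omega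

lemma sum_Icc_neg_one_pow_mul_add_of_odd {R : Type*} [CommRing R] {n : ℕ} (hn : Odd n)
    (f g : ℕ → R) :
    ∑ k ∈ Icc 1 (n - 1), (-1) ^ k * (f k + g k)
      = ∑ k ∈ Icc 1 (n - 1), (-1) ^ k * (g k - f (n - k)) := by
  have hsign {k : ℕ} (hk : k ∈ Icc 1 (n - 1)) : (-1 : R) ^ (n - k) = -(-1) ^ k := by
    rw [mem_Icc] at hk
    rw [neg_one_pow_congr (n := k + 1) (by grind), pow_succ, mul_neg_one]
  simp only [mul_add, mul_sub, sum_add_distrib, sum_sub_distrib]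
  rw [← sum_Icc_reflect (fun k => (-1 : R) ^ k * f k) n,
    sum_congr rfl fun k hk => by rw [hsign hk, neg_mul], sum_neg_distrib]
  abel

theorem qHneg_general (b bb a d : ℕ) (hbd : a * d = b + bb)
    (p : ℕ) (hp : p.Prime) (hp2 : 2 < p) (hap : Nat.gcd a p = 1) :
    qCong p 2
      (∑ k ∈ Finset.Icc 1 (p - 1),
        (-1 : RatFunc ℚ) ^ k *
          ((-1 : RatFunc ℚ) ^ d * RatFunc.X ^ (b * k) + RatFunc.X ^ (bb * k)) /
            qN (a * k) ^ d)
      ((b : RatFunc ℚ) * (1 - RatFunc.X) * qN p *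
          ∑ k ∈ Finset.Icc 1 (p - 1),
            (-1 : RatFunc ℚ) ^ k * RatFunc.X ^ (bb * k) / qN (a * k) ^ d
        - (a : RatFunc ℚ) * (d : RatFunc ℚ) * qN p *
          ∑ k ∈ Finset.Icc 1 (p - 1),
            (-1 : RatFunc ℚ) ^ k * RatFunc.X ^ (bb * k) / qN (a * k) ^ (d + 1)) := by
  have hpa : ¬ p ∣ a := (Nat.Prime.coprime_iff_not_dvd hp).mp (Nat.coprime_comm.mp hap)
  rw [qCong_iff_sub_mem, mul_sum, mul_sum, ← sum_sub_distrib,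
    sum_congr rfl fun k _ => (mul_div_assoc _ _ _).trans (congrArg _ (add_div _ _ _)),
    sum_Icc_neg_one_pow_mul_add_of_odd (hp.odd_of_ne_two hp2.ne'), ← sum_sub_distrib]
  refine Submodule.sum_mem _ fun k hk => ?_
  rw [mem_Icc] at hk
  convert Submodule.smul_mem _ ((-1 : ℚ[X]) ^ k)
    (qCong_iff_sub_mem.mp (qCong_reflect hp hpa hbd (k := k) (m := p - k) (by omega) (by omega)
      (by omega))) using 1
  simp only [Algebra.smul_def, map_pow, map_neg, map_one]
  ring

/-- For non-negative integers `b, b̄, a, d` with `a·d = b + b̄ > 0` and a prime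
`p > 2` with `gcd(a, p) = 1`:
`∑_{k=1}^{p-1} (-1)^k ((-1)^d q^{bk} + q^{b̄k})/[ak]_q^d ≡
  b(1-q)[p]_q ∑_{k=1}^{p-1} (-1)^k q^{b̄k}/[ak]_q^d
    − ad[p]_q ∑_{k=1}^{p-1} (-1)^k q^{b̄k}/[ak]_q^{d+1} (mod [p]_q²)`. -/
theorem qHneg (b bb a d : ℕ) (hbd : a * d = b + bb) (hpos : 0 < b + bb)
    (p : ℕ) (hp : p.Prime) (hp2 : 2 < p) (hap : Nat.gcd a p = 1) :
    qCong p 2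
      (∑ k ∈ Finset.Icc 1 (p - 1),
        (-1 : RatFunc ℚ) ^ k *
          ((-1 : RatFunc ℚ) ^ d * RatFunc.X ^ (b * k) + RatFunc.X ^ (bb * k)) /
            qN (a * k) ^ d)
      ((b : RatFunc ℚ) * (1 - RatFunc.X) * qN p *
          ∑ k ∈ Finset.Icc 1 (p - 1),
            (-1 : RatFunc ℚ) ^ k * RatFunc.X ^ (bb * k) / qN (a * k) ^ d
        - (a : RatFunc ℚ) * (d : RatFunc ℚ) * qN p *
          ∑ k ∈ Finset.Icc 1 (p - 1),
            (-1 : RatFunc ℚ) ^ k * RatFunc.X ^ (bb * k) / qN (a * k) ^ (d + 1)) :=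
  qHneg_general b bb a d hbd p hp hp2 hap
end
end

section
/- Let p be a prime and let a be a positive integer. For every k with 1 ≤ k ≤ p-1, the Gaussian q-binomial coefficient satisfies binom_q(ap−1, k) ≡ (-1)^k · q^{−C(k+1,2)} · (1 − a·[p]_q · ∑_{j=1}^{k} 1/[j]_q) (mod [p]_q^2). -/
open Polynomial Finset

noncomputable section

/-! Write `[n]` for `[n]_q`. The `j`-th factor of `binom_q(ap-1, k)` is
`(1 - q^(ap-j)) / (1 - q^j) = q^(-j) (q^j - 1 + 1 - (q^p)^a) / (1 - q^j)`, and
`1 - (q^p)^a ≡ a (1 - q^p) = a (1 - q) [p]` modulo `(1 - q^p)^2`; for `0 < j < p` this makes the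
factor `≡ -q^(-j) (1 - a [p] / [j])` modulo `[p]^2`. Multiplying over `j ≤ k` and expanding
`∏ (1 - a [p] / [j])` to first order in `[p]` gives the claim.

As `[p] = Φ_p` is prime in `ℚ[q]`, a congruence modulo `[p]^r` follows from a bound on the
`[p]`-adic valuation of `ℚ(q)`, which controls products and sums by the ultrametric inequality.
The elements `q`, `[j]` and `1 - q^j` (`0 < j < p`) are units for this valuation since they do
not vanish at a primitive `p`-th root of unity. -/

section
variable {R Γ₀ ι : Type*} [CommRing R] [LinearOrderedCommMonoidWithZero Γ₀] (v : Valuation R Γ₀)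
  {s : Finset ι}

theorem Valuation.map_prod_le_one {f : ι → R} (hf : ∀ i ∈ s, v (f i) ≤ 1) :
    v (∏ i ∈ s, f i) ≤ 1 := by
  rw [map_prod]
  exact prod_le_one' hf

theorem Valuation.map_prod_sub_prod_le {f g : ι → R} {γ : Γ₀} (hf : ∀ i ∈ s, v (f i) ≤ 1)
    (hg : ∀ i ∈ s, v (g i) ≤ 1) (hfg : ∀ i ∈ s, v (f i - g i) ≤ γ) :
    v (∏ i ∈ s, f i - ∏ i ∈ s, g i) ≤ γ := by
  classical
  induction s using Finset.induction_on with
  | empty => simp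
  | insert i s hi ih =>
    simp only [forall_mem_insert] at hf hg hfg
    rw [prod_insert hi, prod_insert hi,
      show f i * ∏ j ∈ s, f j - g i * ∏ j ∈ s, g j
        = f i * (∏ j ∈ s, f j - ∏ j ∈ s, g j) + (f i - g i) * ∏ j ∈ s, g j by ring]
    refine v.map_add_le ?_ ?_ <;> rw [map_mul]
    · exact mul_le_of_le_one_of_le hf.1 (ih hf.2 hg.2 hfg.2)
    · exact mul_le_of_le_of_le_one hfg.1 (v.map_prod_le_one hg.2)

theorem Valuation.map_prod_one_sub_sub_one_sub_sum_le {t : ι → R} {γ : Γ₀} (hγ : γ ≤ 1)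
    (ht : ∀ i ∈ s, v (t i) ≤ γ) :
    v (∏ i ∈ s, (1 - t i) - (1 - ∑ i ∈ s, t i)) ≤ γ ^ 2 := by
  classical
  induction s using Finset.induction_on with
  | empty => simp
  | insert i s hi ih =>
    simp only [forall_mem_insert] at ht
    rw [prod_insert hi, sum_insert hi,
      show (1 - t i) * ∏ j ∈ s, (1 - t j) - (1 - (t i + ∑ j ∈ s, t j))
        = (1 - t i) * (∏ j ∈ s, (1 - t j) - (1 - ∑ j ∈ s, t j)) + t i * ∑ j ∈ s, t j by ring]
    refine v.map_add_le ?_ ?_ <;> rw [map_mul]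
    · exact mul_le_of_le_one_of_le (v.map_sub_le v.map_one.le (ht.1.trans hγ)) (ih ht.2)
    · exact pow_two γ ▸ mul_le_mul' ht.1 (v.map_sum_le ht.2)

end

namespace IsDedekindDomain.HeightOneSpectrum

open WithZero

variable {R K : Type*} [CommRing R] [IsDedekindDomain R] [Field K] [Algebra R K]
  [IsFractionRing R K] {v : HeightOneSpectrum R} {π : R}

theorem valuation_of_algebraMap_eq_exp_neg_one (hv : v.asIdeal = Ideal.span {π}) :
    v.valuation K (algebraMap R K π) = exp (-1) := by
  rw [valuation_of_algebraMap]
  refine intValuation_singleton _ (fun hπ => v.ne_bot ?_) hv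
  rw [hv, hπ, Ideal.span_singleton_eq_bot]

theorem valuation_of_algebraMap_eq_one_of_not_dvd (hv : v.asIdeal = Ideal.span {π}) {b : R}
    (hb : ¬ π ∣ b) : v.valuation K (algebraMap R K b) = 1 := by
  simpa [hv, Ideal.mem_span_singleton] using hb

theorem exists_mul_eq_pow_mul_of_valuation_le (hv : v.asIdeal = Ideal.span {π}) {x : K} {r : ℕ}
    (hx : v.valuation K x ≤ exp (-(r : ℤ))) :
    ∃ a b : R, ¬ π ∣ b ∧ x * algebraMap R K b = algebraMap R K (π ^ r * a) := by
  have hπ : v.valuation K (algebraMap R K π) ≠ 0 := by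
    simp [valuation_of_algebraMap_eq_exp_neg_one hv]
  obtain ⟨a, ⟨b, hb⟩, e⟩ :=
    v.exists_primeCompl_mul_eq_of_integer (x / algebraMap R K π ^ r) (by
      rw [map_div₀, map_pow, valuation_of_algebraMap_eq_exp_neg_one hv, ← exp_nsmul]
      rwa [div_le_one₀ (zero_lt_iff.2 exp_ne_zero), smul_neg, nsmul_one])
  refine ⟨a, b, fun h => hb (hv ▸ Ideal.mem_span_singleton.2 h), ?_⟩
  rw [map_mul, map_pow, ← e]
  field_simp [(Valuation.ne_zero_iff _).1 hπ]

end IsDedekindDomain.HeightOneSpectrum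

theorem Finset.prod_Icc_neg_inv_pow_mul {K : Type*} [Field K] (x : K) (f : ℕ → K) (k : ℕ) :
    ∏ j ∈ Icc 1 k, (-(x ^ j)⁻¹ * f j)
      = (-1) ^ k * x ^ (-((k + 1).choose 2 : ℤ)) * ∏ j ∈ Icc 1 k, f j := by
  induction k with
  | zero => simp
  | succ k ih =>
    rw [prod_Icc_succ_top (by omega), prod_Icc_succ_top (by omega), ih]
    simp only [zpow_neg, zpow_natCast, Nat.choose_succ_succ' (k + 1) 1, Nat.choose_one_right,
      pow_add, pow_succ, mul_inv]
    ring

theorem sq_one_sub_dvd_one_sub_pow_sub_mul {R : Type*} [CommRing R] (y : R) (a : ℕ) :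
    (1 - y) ^ 2 ∣ 1 - y ^ a - a * (1 - y) := by
  have h : 1 - y ^ a - a * (1 - y) = (1 - y) * ∑ i ∈ range a, (y ^ i - 1) := by
    rw [sum_sub_distrib, mul_sub (1 - y), mul_neg_geom_sum, sum_const, card_range, nsmul_one]
    ring
  rw [h, sq]
  exact mul_dvd_mul_left _ (dvd_sum fun i _ => dvd_sub_comm.1 (one_sub_dvd_one_sub_pow y i))

theorem one_sub_X_pow_eq_mul_qIntP (n : ℕ) : (1 : ℚ[X]) - X ^ n = (1 - X) * qIntP n :=
  (mul_neg_geom_sum X n).symm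

theorem qN_mul_one_sub_X (n : ℕ) : (1 - RatFunc.X) * qN n = 1 - RatFunc.X ^ n := by
  simpa [qN] using congrArg (algebraMap ℚ[X] (RatFunc ℚ)) (one_sub_X_pow_eq_mul_qIntP n).symm

theorem RatFunc.one_sub_X_pow_ne_zero {K : Type*} [Field K] {m : ℕ} (hm : m ≠ 0) :
    (1 : RatFunc K) - RatFunc.X ^ m ≠ 0 := by
  rw [sub_ne_zero, ne_comm, ← RatFunc.algebraMap_X, ← map_pow, Ne,
    ← map_one (algebraMap K[X] _), (IsFractionRing.injective K[X] (RatFunc K)).eq_iff]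
  exact fun h => by simpa [hm] using congrArg natDegree h

theorem qqPoch_succ (m : ℕ) : qqPoch (m + 1) = qqPoch m * (1 - RatFunc.X ^ (m + 1)) := by
  simp [qqPoch, prod_range_succ]

theorem qqPoch_ne_zero (m : ℕ) : qqPoch m ≠ 0 := by
  induction m with
  | zero => simp [qqPoch]
  | succ m ih =>
    rw [qqPoch_succ]
    exact mul_ne_zero ih (RatFunc.one_sub_X_pow_ne_zero (K := ℚ) m.succ_ne_zero)

theorem qbin_eq_prod {n k : ℕ} (hk : k ≤ n) :
    qbin n k = ∏ j ∈ Icc 1 k, (1 - RatFunc.X ^ (n + 1 - j)) / (1 - RatFunc.X ^ j) := by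
  induction k with
  | zero => simp [qbin, show qqPoch 0 = 1 by simp [qqPoch], qqPoch_ne_zero]
  | succ k ih =>
    rw [prod_Icc_succ_top (by omega), ← ih (by omega), qbin, qbin, if_pos hk, if_pos (by omega),
      qqPoch_succ, show n - k = n - (k + 1) + 1 by omega, qqPoch_succ,
      show n - (k + 1) + 1 = n + 1 - (k + 1) by omega]
    have := qqPoch_ne_zero k
    have := qqPoch_ne_zero (n - (k + 1))
    have := RatFunc.one_sub_X_pow_ne_zero (K := ℚ) (m := k + 1) (by omega)
    have := RatFunc.one_sub_X_pow_ne_zero (K := ℚ) (m := n + 1 - (k + 1)) (by omega)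
    field_simp

theorem one_sub_X_pow_div_sub_eq {p a j : ℕ} (hj0 : j ≠ 0) (hja : j ≤ a * p) {H : ℚ[X]}
    (hH : (1 : ℚ[X]) - (X ^ p) ^ a - (a : ℚ[X]) * (1 - X ^ p) = (1 - X ^ p) ^ 2 * H) :
    (1 - RatFunc.X ^ (a * p - j)) / (1 - RatFunc.X ^ j)
        - -(RatFunc.X ^ j)⁻¹ * (1 - (a : RatFunc ℚ) * qN p / qN j)
      = qN p ^ 2 * algebraMap ℚ[X] (RatFunc ℚ) ((1 - X) ^ 2 * H)
          / (RatFunc.X ^ j * (1 - RatFunc.X ^ j)) := by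
  have hHK := congrArg (algebraMap ℚ[X] (RatFunc ℚ)) hH
  simp only [map_sub, map_mul, map_pow, map_one, map_natCast, RatFunc.algebraMap_X,
    ← qN_mul_one_sub_X p] at hHK ⊢
  have hpow : (RatFunc.X : RatFunc ℚ) ^ (a * p - j) * RatFunc.X ^ j = (RatFunc.X ^ p) ^ a := by
    rw [← pow_add, ← pow_mul, Nat.sub_add_cancel hja, mul_comm]
  have hj := RatFunc.one_sub_X_pow_ne_zero (K := ℚ) hj0
  rw [← qN_mul_one_sub_X j] at hj ⊢
  have := RatFunc.X_ne_zero (K := ℚ)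
  have := left_ne_zero_of_mul hj
  have := right_ne_zero_of_mul hj
  field_simp
  linear_combination hHK - hpow + qN_mul_one_sub_X j

section
variable {p : ℕ}

theorem qIntP_eq_cyclotomic (hp : p.Prime) : qIntP p = cyclotomic p ℚ := by
  have := Fact.mk hp
  rw [cyclotomic_prime]
  rfl

theorem qIntP_prime (hp : p.Prime) : Prime (qIntP p) :=
  qIntP_eq_cyclotomic hp ▸ (cyclotomic.irreducible_rat hp.pos).prime

theorem aeval_eq_zero_of_qIntP_dvd (hp : p.Prime) {ζ : ℂ} (hζ : IsPrimitiveRoot ζ p) {f : ℚ[X]}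
    (h : qIntP p ∣ f) : aeval ζ f = 0 := by
  obtain ⟨g, rfl⟩ := h
  rw [map_mul, qIntP_eq_cyclotomic hp, aeval_def, eval₂_eq_eval_map, map_cyclotomic,
    (hζ.isRoot_cyclotomic hp.pos).eq_zero, zero_mul]

theorem qIntP_not_dvd_X (hp : p.Prime) : ¬ qIntP p ∣ X := by
  have hζ := Complex.isPrimitiveRoot_exp p hp.ne_zero
  refine mt (aeval_eq_zero_of_qIntP_dvd hp hζ) ?_
  simp [hζ.ne_zero hp.ne_zero]

theorem qIntP_not_dvd_one_sub_X_pow (hp : p.Prime) {j : ℕ} (hj0 : j ≠ 0) (hjp : j < p) :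
    ¬ qIntP p ∣ 1 - X ^ j := by
  have hζ := Complex.isPrimitiveRoot_exp p hp.ne_zero
  refine mt (aeval_eq_zero_of_qIntP_dvd hp hζ) ?_
  simp [sub_eq_zero, (hζ.pow_ne_one_of_pos_of_lt hj0 hjp).symm]

theorem qIntP_not_dvd_qIntP (hp : p.Prime) {j : ℕ} (hj0 : j ≠ 0) (hjp : j < p) :
    ¬ qIntP p ∣ qIntP j := fun h =>
  qIntP_not_dvd_one_sub_X_pow hp hj0 hjp (one_sub_X_pow_eq_mul_qIntP j ▸ dvd_mul_of_dvd_right h _)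

open IsDedekindDomain HeightOneSpectrum WithZero

def qIntPValuation (hp : p.Prime) : Valuation (RatFunc ℚ) ℤᵐ⁰ :=
  (ofPrime (Ideal.prime_span_singleton_iff.2 (qIntP_prime hp))).valuation (RatFunc ℚ)

theorem qCong_of_qIntPValuation_le (hp : p.Prime) {r : ℕ} {x y : RatFunc ℚ}
    (h : qIntPValuation hp (x - y) ≤ exp (-(r : ℤ))) : qCong p r x y := by
  obtain ⟨a, b, hb, e⟩ := exists_mul_eq_pow_mul_of_valuation_le rfl h
  exact ⟨a, b, ((qIntP_prime hp).coprime_iff_not_dvd.2 hb).symm, e⟩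

theorem qIntPValuation_qN_self (hp : p.Prime) : qIntPValuation hp (qN p) = exp (-1) :=
  valuation_of_algebraMap_eq_exp_neg_one rfl

theorem qIntPValuation_algebraMap_eq_one (hp : p.Prime) {f : ℚ[X]} (hf : ¬ qIntP p ∣ f) :
    qIntPValuation hp (algebraMap ℚ[X] (RatFunc ℚ) f) = 1 :=
  valuation_of_algebraMap_eq_one_of_not_dvd rfl hf

theorem qIntPValuation_algebraMap_le_one (hp : p.Prime) (f : ℚ[X]) :
    qIntPValuation hp (algebraMap ℚ[X] (RatFunc ℚ) f) ≤ 1 :=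
  valuation_le_one _ f

theorem qIntPValuation_X (hp : p.Prime) : qIntPValuation hp RatFunc.X = 1 := by
  rw [← RatFunc.algebraMap_X]
  exact qIntPValuation_algebraMap_eq_one hp (qIntP_not_dvd_X hp)

theorem qIntPValuation_one_sub_X_pow_le_one (hp : p.Prime) (m : ℕ) :
    qIntPValuation hp (1 - RatFunc.X ^ m) ≤ 1 := by
  have := qIntPValuation_algebraMap_le_one hp (1 - X ^ m)
  rwa [map_sub, map_one, map_pow, RatFunc.algebraMap_X] at this

theorem qIntPValuation_one_sub_X_pow (hp : p.Prime) {j : ℕ} (hj0 : j ≠ 0) (hjp : j < p) :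
    qIntPValuation hp (1 - RatFunc.X ^ j) = 1 := by
  simpa using qIntPValuation_algebraMap_eq_one hp (qIntP_not_dvd_one_sub_X_pow hp hj0 hjp)

theorem qIntPValuation_factor_sub_le (hp : p.Prime) {a j : ℕ} (ha : 0 < a) (hj0 : j ≠ 0)
    (hjp : j < p) :
    qIntPValuation hp ((1 - RatFunc.X ^ (a * p - j)) / (1 - RatFunc.X ^ j)
        - -(RatFunc.X ^ j)⁻¹ * (1 - (a : RatFunc ℚ) * qN p / qN j)) ≤ exp (-2) := by
  obtain ⟨H, hH⟩ := sq_one_sub_dvd_one_sub_pow_sub_mul (X ^ p : ℚ[X]) a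
  rw [one_sub_X_pow_div_sub_eq hj0 (hjp.le.trans (Nat.le_mul_of_pos_left p ha)) hH, map_div₀,
    Valuation.map_mul, Valuation.map_mul, Valuation.map_pow, Valuation.map_pow,
    qIntPValuation_qN_self, qIntPValuation_X, qIntPValuation_one_sub_X_pow hp hj0 hjp, one_pow,
    one_mul, div_one, ← exp_nsmul]
  exact mul_le_of_le_one_right' (qIntPValuation_algebraMap_le_one hp _)

theorem qIntPValuation_factor_le_one (hp : p.Prime) (m : ℕ) {j : ℕ} (hj0 : j ≠ 0) (hjp : j < p) :
    qIntPValuation hp ((1 - RatFunc.X ^ m) / (1 - RatFunc.X ^ j)) ≤ 1 := by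
  rw [map_div₀, qIntPValuation_one_sub_X_pow hp hj0 hjp, div_one]
  exact qIntPValuation_one_sub_X_pow_le_one hp m

theorem qIntPValuation_natCast_mul_qN_div_qN_le (hp : p.Prime) (a : ℕ) {j : ℕ} (hj0 : j ≠ 0)
    (hjp : j < p) : qIntPValuation hp ((a : RatFunc ℚ) * qN p / qN j) ≤ exp (-1) := by
  rw [map_div₀, Valuation.map_mul, qIntPValuation_qN_self, qN,
    qIntPValuation_algebraMap_eq_one hp (qIntP_not_dvd_qIntP hp hj0 hjp), div_one,
    ← map_natCast (algebraMap ℚ[X] (RatFunc ℚ))]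
  exact mul_le_of_le_one_left' (qIntPValuation_algebraMap_le_one hp _)

theorem qIntPValuation_neg_inv_X_pow_mul (hp : p.Prime) (j : ℕ) (z : RatFunc ℚ) :
    qIntPValuation hp (-(RatFunc.X ^ j)⁻¹ * z) = qIntPValuation hp z := by
  rw [Valuation.map_mul, Valuation.map_neg, map_inv₀, Valuation.map_pow, qIntPValuation_X,
    one_pow, inv_one, one_mul]

theorem qIntPValuation_neg_one_pow_mul_X_zpow_mul (hp : p.Prime) (k : ℕ) (n : ℤ) (z : RatFunc ℚ) :
    qIntPValuation hp ((-1) ^ k * RatFunc.X ^ n * z) = qIntPValuation hp z := by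
  rw [Valuation.map_mul, Valuation.map_mul, Valuation.map_pow, Valuation.map_neg,
    Valuation.map_one, map_zpow₀, qIntPValuation_X, one_zpow, one_pow, one_mul, one_mul]

theorem qIntPValuation_qbin_sub_prod_le (hp : p.Prime) {a k : ℕ} (ha : 0 < a) (hkp : k < p) :
    qIntPValuation hp (qbin (a * p - 1) k - (-1) ^ k * RatFunc.X ^ (-((k + 1).choose 2 : ℤ))
      * ∏ j ∈ Icc 1 k, (1 - (a : RatFunc ℚ) * qN p / qN j)) ≤ exp (-2) := by
  have hrange : ∀ j ∈ Icc 1 k, j ≠ 0 ∧ j < p := fun j hj => by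
    rw [mem_Icc] at hj
    omega
  have hpa := Nat.le_mul_of_pos_left p ha
  rw [qbin_eq_prod (by omega), Nat.sub_add_cancel (by omega), ← prod_Icc_neg_inv_pow_mul]
  refine (qIntPValuation hp).map_prod_sub_prod_le
    (fun j hj => qIntPValuation_factor_le_one hp _ (hrange j hj).1 (hrange j hj).2)
    (fun j hj => ?_)
    (fun j hj => qIntPValuation_factor_sub_le hp ha (hrange j hj).1 (hrange j hj).2)
  rw [qIntPValuation_neg_inv_X_pow_mul]
  exact (qIntPValuation hp).map_sub_le (Valuation.map_one _).le
    ((qIntPValuation_natCast_mul_qN_div_qN_le hp a (hrange j hj).1 (hrange j hj).2).trans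
      (exp_le_exp.2 (by norm_num)))

theorem qIntPValuation_prod_one_sub_sub_le (hp : p.Prime) (a : ℕ) {k : ℕ} (hkp : k < p) :
    qIntPValuation hp (∏ j ∈ Icc 1 k, (1 - (a : RatFunc ℚ) * qN p / qN j)
      - (1 - ∑ j ∈ Icc 1 k, (a : RatFunc ℚ) * qN p / qN j)) ≤ exp (-2) := by
  rw [show (-2 : ℤ) = 2 • (-1) by rfl, exp_nsmul]
  refine (qIntPValuation hp).map_prod_one_sub_sub_one_sub_sum_le (exp_le_exp.2 (by norm_num))
    fun j hj => ?_
  rw [mem_Icc] at hj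
  exact qIntPValuation_natCast_mul_qN_div_qN_le hp a (by omega) (by omega)

end

theorem qbin_ap_sub_one_general (p a : ℕ) (hp : p.Prime) (ha : 0 < a)
    (k : ℕ) (hk : k ≤ p - 1) :
    qCong p 2 (qbin (a * p - 1) k)
      ((-1 : RatFunc ℚ) ^ k * (RatFunc.X : RatFunc ℚ) ^ (-((k + 1).choose 2 : ℤ)) *
        (1 - (a : RatFunc ℚ) * qN p * ∑ j ∈ Finset.Icc 1 k, 1 / qN j)) := by
  have hkp : k < p := by have := hp.two_le; omega
  apply qCong_of_qIntPValuation_le hp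
  have hsplit : qbin (a * p - 1) k
      - (-1) ^ k * RatFunc.X ^ (-((k + 1).choose 2 : ℤ))
        * (1 - (a : RatFunc ℚ) * qN p * ∑ j ∈ Icc 1 k, 1 / qN j)
      = (qbin (a * p - 1) k - (-1) ^ k * RatFunc.X ^ (-((k + 1).choose 2 : ℤ))
          * ∏ j ∈ Icc 1 k, (1 - (a : RatFunc ℚ) * qN p / qN j))
        + (-1) ^ k * RatFunc.X ^ (-((k + 1).choose 2 : ℤ))
          * (∏ j ∈ Icc 1 k, (1 - (a : RatFunc ℚ) * qN p / qN j)
            - (1 - ∑ j ∈ Icc 1 k, (a : RatFunc ℚ) * qN p / qN j)) := by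
    simp only [mul_sum, mul_one_div]
    ring
  rw [hsplit]
  refine (qIntPValuation hp).map_add_le (qIntPValuation_qbin_sub_prod_le hp ha hkp) ?_
  rw [qIntPValuation_neg_one_pow_mul_X_zpow_mul]
  exact qIntPValuation_prod_one_sub_sub_le hp a hkp

/-- For a prime `p`, a positive integer `a`, and `1 ≤ k ≤ p-1`:
`binom_q(ap−1, k) ≡ (-1)^k q^{−C(k+1,2)} (1 − a[p]_q ∑_{j=1}^{k} 1/[j]_q)
(mod [p]_q²)`. -/
theorem qbin_ap_sub_one (p a : ℕ) (hp : p.Prime) (ha : 0 < a)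
    (k : ℕ) (hk1 : 1 ≤ k) (hk : k ≤ p - 1) :
    qCong p 2 (qbin (a * p - 1) k)
      ((-1 : RatFunc ℚ) ^ k * (RatFunc.X : RatFunc ℚ) ^ (-((k + 1).choose 2 : ℤ)) *
        (1 - (a : RatFunc ℚ) * qN p * ∑ j ∈ Finset.Icc 1 k, 1 / qN j)) :=
  qbin_ap_sub_one_general p a hp ha k hk
end
end
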